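/- arXiv:1305.1109 — 4 statements merged into one kernel-verified Lean document; each statement's English description precedes it below -/
import Mathlib

section
/- Let T₀ < 0 < T₁ and let w : [T₀,T₁] → ℝ^ℤ be a C¹ solution of the cooperative linear system. Let k ≥ 1 and suppose that w_0(0) ≠ 0, w_1(0) = w_2(0) = ⋯ = w_k(0) = 0, and w_{k+1}(0) ≠ 0. Then there exist real numbers d_1, …, d_k such that for each j = 1, …, k one has w_j(t) = d_j·t^{j*} + o(t^{j*}) as t → 0, where j* = min{j, k+1−j}. -/
open Set Filter Topology

/-- `w` has a zero at position `j`: the graph of `i ↦ w i` crosses `0` in `[j, j+1)`. -/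
def zeroAt (w : ℤ → ℝ) (j : ℤ) : Prop :=
  ∃ x : ℝ, 0 ≤ x ∧ x < 1 ∧ w j + (w (j + 1) - w j) * x = 0

/-- The zero of `w` at `j` is singular. -/
def singZeroAt (w : ℤ → ℝ) (j : ℤ) : Prop :=
  w j = 0 ∧ (w (j + 1) = 0 ∨ w (j - 1) = 0 ∨ w (j - 1) * w (j + 1) > 0)

/-- The number of positions `j` with `m ≤ j ≤ n - 1` at which `w` has a zero. -/
noncomputable def zCount (w : ℤ → ℝ) (m n : ℤ) : ℕ :=
  Set.ncard {j : ℤ | m ≤ j ∧ j < n ∧ zeroAt w j}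

/-- A configuration `w : ℤ → ℝ` has sub-exponential growth:
`limsup_{|j| → ∞} (log |w j|)/|j| ≤ 0`. -/
def SubExp (w : ℤ → ℝ) : Prop :=
  ∀ ε : ℝ, 0 < ε → ∀ᶠ j in (Filter.cofinite : Filter ℤ), Real.log |w j| ≤ ε * |(j : ℝ)|

open Asymptotics

lemma mulExpand {l : Filter ℝ} {φ g : ℝ → ℝ} {φ0 d : ℝ} {m : ℕ}
    (hφ : Tendsto φ l (𝓝 φ0))
    (hg : (fun t => g t - d * t ^ m) =o[l] fun t => t ^ m) :
    (fun t => φ t * g t - (φ0 * d) * t ^ m) =o[l] fun t => t ^ m := by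
  have h1 : (fun t => φ t * (g t - d * t ^ m)) =o[l] fun t => (1:ℝ) * t ^ m :=
    (hφ.isBigO_one ℝ).mul_isLittleO hg
  have h2 : (fun t => φ t - φ0) =o[l] fun _ => (1:ℝ) := by
    refine (isLittleO_one_iff ℝ).mpr ?_
    simpa using hφ.sub_const φ0
  have h3 : (fun t => (φ t - φ0) * (d * t ^ m)) =o[l] fun t => (1:ℝ) * t ^ m :=
    h2.mul_isBigO ((isBigO_refl (fun t : ℝ => t ^ m) l).const_mul_left d)
  exact (h1.add h3).congr (fun x => by ring) (fun x => one_mul _)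

lemma abs_le_of_uIcc {s t : ℝ} (hs : s ∈ Set.uIcc 0 t) : |s| ≤ |t| := by
  rcases le_total 0 t with h | h
  · rw [Set.uIcc_of_le h, Set.mem_Icc] at hs
    rw [abs_of_nonneg h, abs_of_nonneg hs.1]; exact hs.2
  · rw [Set.uIcc_of_ge h, Set.mem_Icc] at hs
    rw [abs_of_nonpos h, abs_of_nonpos (hs.2.trans (le_refl 0))]
    linarith [hs.1]

lemma intLemma {T₀ T₁ : ℝ} (hT₀ : T₀ < 0) (hT₁ : 0 < T₁) {f f' : ℝ → ℝ} {m : ℕ}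
    (hderiv : ∀ t ∈ Set.Icc T₀ T₁, HasDerivWithinAt f (f' t) (Set.Icc T₀ T₁) t)
    (hf0 : f 0 = 0) (ho : f' =o[𝓝 (0:ℝ)] fun t => t ^ m) :
    f =o[𝓝 (0:ℝ)] fun t => t ^ (m + 1) := by
  rw [isLittleO_iff]
  intro ε hε
  have h1 : ∀ᶠ s in 𝓝 (0:ℝ), ‖f' s‖ ≤ ε * ‖s ^ m‖ := ho.def hε
  have h2 : ∀ᶠ s in 𝓝 (0:ℝ), s ∈ Set.Icc T₀ T₁ :=
    eventually_of_mem (Icc_mem_nhds hT₀ hT₁) (fun s hs => hs)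
  obtain ⟨r, hr, hball⟩ := Metric.eventually_nhds_iff.mp (h1.and h2)
  have key : ∀ t : ℝ, dist t 0 < r → ‖f t‖ ≤ ε * ‖t ^ (m+1)‖ := by
    intro t ht
    have habs : |t| < r := by simpa [Real.dist_eq] using ht
    have hmem : ∀ s ∈ Set.uIcc 0 t, dist s 0 < r := by
      intro s hs
      rw [Real.dist_eq, sub_zero]
      exact lt_of_le_of_lt (abs_le_of_uIcc hs) habs
    have hsub : Set.uIcc 0 t ⊆ Set.Icc T₀ T₁ := fun s hs => (hball (hmem s hs)).2
    have hboundS : ∀ s ∈ Set.uIcc 0 t, ‖f' s‖ ≤ ε * |t| ^ m := by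
      intro s hs
      calc ‖f' s‖ ≤ ε * ‖s ^ m‖ := (hball (hmem s hs)).1
        _ = ε * |s| ^ m := by rw [Real.norm_eq_abs, abs_pow]
        _ ≤ ε * |t| ^ m := by gcongr ε * ?_ ^ m; exact abs_le_of_uIcc hs
    have hderivS : ∀ s ∈ Set.uIcc 0 t, HasDerivWithinAt f (f' s) (Set.uIcc 0 t) s :=
      fun s hs => (hderiv s (hsub hs)).mono hsub
    have hmv := Convex.norm_image_sub_le_of_norm_hasDerivWithin_le hderivS hboundS
      (convex_uIcc 0 t) (Set.left_mem_uIcc) (Set.right_mem_uIcc)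
    calc ‖f t‖ = ‖f t - f 0‖ := by rw [hf0, sub_zero]
      _ ≤ ε * |t| ^ m * ‖t - 0‖ := hmv
      _ = ε * ‖t ^ (m+1)‖ := by
          rw [Real.norm_eq_abs, Real.norm_eq_abs, sub_zero, abs_pow, pow_succ]
          ring
  exact Metric.eventually_nhds_iff.mpr ⟨r, hr, fun {t} ht => key t ht⟩

open Asymptotics in
theorem taylor_expansion_at_finite_degree_zero
    (T₀ T₁ δ : ℝ) (hT : T₀ < T₁) (hδ : 0 < δ)
    (a b c : ℤ → ℝ → ℝ) (w : ℝ → ℤ → ℝ)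
    (hacont : ∀ j : ℤ, ContinuousOn (a j) (Set.Icc T₀ T₁))
    (hbcont : ∀ j : ℤ, ContinuousOn (b j) (Set.Icc T₀ T₁))
    (hccont : ∀ j : ℤ, ContinuousOn (c j) (Set.Icc T₀ T₁))
    (hbound : ∃ C : ℝ, ∀ j : ℤ, ∀ t ∈ Set.Icc T₀ T₁,
      |a j t| ≤ C ∧ |b j t| ≤ C ∧ |c j t| ≤ C)
    (hpos : ∀ j : ℤ, ∀ t ∈ Set.Icc T₀ T₁, δ ≤ a j t ∧ δ ≤ b j t)
    (hsol : ∀ j : ℤ, ∀ t ∈ Set.Icc T₀ T₁,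
      HasDerivWithinAt (fun s => w s j)
        (a j t * w t (j - 1) + b j t * w t (j + 1) + c j t * w t j) (Set.Icc T₀ T₁) t)
    (hT₀ : T₀ < 0) (hT₁ : 0 < T₁)
    (k : ℕ) (hk : 1 ≤ k)
    (hw0 : w 0 (0 : ℤ) ≠ 0)
    (hz : ∀ j : ℕ, 1 ≤ j → j ≤ k → w 0 (j : ℤ) = 0)
    (hwk : w 0 ((k : ℤ) + 1) ≠ 0) :
    ∃ d : ℕ → ℝ, ∀ j : ℕ, 1 ≤ j → j ≤ k →
      (fun t : ℝ => w t (j : ℤ) - d j * t ^ (min j (k + 1 - j)))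
        =o[𝓝[Set.Icc T₀ T₁] (0 : ℝ)] (fun t : ℝ => t ^ (min j (k + 1 - j))) := by
  have hmem0 : (0:ℝ) ∈ Set.Icc T₀ T₁ := ⟨hT₀.le, hT₁.le⟩
  have hnl : 𝓝[Set.Icc T₀ T₁] (0:ℝ) = 𝓝 0 :=
    nhdsWithin_eq_nhds.mpr (Icc_mem_nhds hT₀ hT₁)
  have htend : ∀ (φ : ℤ → ℝ → ℝ), (∀ j, ContinuousOn (φ j) (Set.Icc T₀ T₁)) →
      ∀ p : ℤ, Tendsto (φ p) (𝓝 (0:ℝ)) (𝓝 (φ p 0)) := by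
    intro φ hφ p
    have h := hφ p 0 hmem0
    rwa [ContinuousWithinAt, hnl] at h
  have hcontw : ∀ p : ℤ, Tendsto (fun s => w s p) (𝓝 (0:ℝ)) (𝓝 (w 0 p)) := by
    intro p
    have h := (hsol p 0 hmem0).continuousWithinAt
    rwa [ContinuousWithinAt, hnl] at h
  have Q : ∀ m : ℕ, ∀ j : ℕ, j ≤ k + 1 → m ≤ min j (k + 1 - j) →
      ∃ d : ℝ, (fun t : ℝ => w t (j:ℤ) - d * t ^ m) =o[𝓝 (0:ℝ)] fun t => t ^ m := by
    intro m
    induction m with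
    | zero =>
      intro j _ _
      refine ⟨w 0 (j:ℤ), ?_⟩
      simp only [pow_zero, mul_one]
      refine (isLittleO_one_iff ℝ).mpr ?_
      simpa using (hcontw (j:ℤ)).sub_const (w 0 (j:ℤ))
    | succ m ih =>
      intro j hj hm
      have hj1 : 1 ≤ j := by omega
      have hjk : j ≤ k := by omega
      obtain ⟨dm, hdm⟩ := ih (j - 1) (by omega) (by omega)
      obtain ⟨dp, hdp⟩ := ih (j + 1) (by omega) (by omega)
      obtain ⟨d0, hd0⟩ := ih j (by omega) (by omega)
      have hcast1 : ((j - 1 : ℕ) : ℤ) = (j:ℤ) - 1 := by omega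
      have hcast2 : ((j + 1 : ℕ) : ℤ) = (j:ℤ) + 1 := by push_cast; ring
      rw [hcast1] at hdm
      rw [hcast2] at hdp
      set e := a (j:ℤ) 0 * dm + b (j:ℤ) 0 * dp + c (j:ℤ) 0 * d0 with he
      have hA := mulExpand (htend a hacont (j:ℤ)) hdm
      have hB := mulExpand (htend b hbcont (j:ℤ)) hdp
      have hC := mulExpand (htend c hccont (j:ℤ)) hd0
      have hsum : (fun t => (a (j:ℤ) t * w t ((j:ℤ)-1) + b (j:ℤ) t * w t ((j:ℤ)+1)
          + c (j:ℤ) t * w t (j:ℤ)) - e * t ^ m) =o[𝓝 (0:ℝ)] fun t => t ^ m := by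
        refine ((hA.add hB).add hC).congr (fun x => by rw [he]; ring) (fun x => by ring)
      refine ⟨e / ((m:ℝ) + 1), ?_⟩
      have hne : ((m:ℝ) + 1) ≠ 0 := by positivity
      refine intLemma hT₀ hT₁
        (f' := fun t => (a (j:ℤ) t * w t ((j:ℤ)-1) + b (j:ℤ) t * w t ((j:ℤ)+1)
          + c (j:ℤ) t * w t (j:ℤ)) - e * t ^ m) ?_ ?_ hsum
      · intro t ht
        have h1 := hsol (j:ℤ) t ht
        have h2 : HasDerivWithinAt (fun s : ℝ => e / ((m:ℝ)+1) * s ^ (m+1))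
            (e * t ^ m) (Set.Icc T₀ T₁) t := by
          have h3 := ((hasDerivAt_pow (m+1) t).const_mul (e / ((m:ℝ)+1))).hasDerivWithinAt
            (s := Set.Icc T₀ T₁)
          convert h3 using 1
          · rfl
          · rfl
          simp only [Nat.add_sub_cancel]
          push_cast
          field_simp
        exact h1.sub h2
      · simp [hz j hj1 hjk]
  have key : ∀ j : ℕ, 1 ≤ j → j ≤ k →
      ∃ d : ℝ, (fun t : ℝ => w t (j:ℤ) - d * t ^ (min j (k+1-j)))
        =o[𝓝 (0:ℝ)] fun t => t ^ (min j (k+1-j)) :=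
    fun j h1 h2 => Q (min j (k+1-j)) j (by omega) le_rfl
  refine ⟨fun j => if h : 1 ≤ j ∧ j ≤ k then (key j h.1 h.2).choose else 0,
    fun j h1 h2 => ?_⟩
  simp only [dif_pos (⟨h1, h2⟩ : 1 ≤ j ∧ j ≤ k)]
  exact ((key j h1 h2).choose_spec).mono hnl.le
end

section
/- Let T₀ < 0 < T₁ and let w : [T₀,T₁] → ℝ^ℤ be a C¹ solution of the cooperative linear system. Suppose w_0(0) ≠ 0 and w_i(0) = 0 for all integers i ≥ 1. Then for every integer j ≥ 1 one has w_j(t) = d_j·t^{j} + o(t^{j}) as t → 0, where d_j = (w_0(0)/j!)·∏_{i=1}^{j} a_i(0); in particular each d_j is nonzero and has the same sign as w_0(0). -/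
open Set Filter Topology

open Asymptotics

lemma mvt_bound {f g : ℝ → ℝ} {ρ C : ℝ} {k : ℕ}
    (hf : ∀ x ∈ Set.Icc (-ρ) ρ, HasDerivAt f (g x) x)
    (hf0 : f 0 = 0) (hC : 0 ≤ C)
    (hg : ∀ x ∈ Set.Icc (-ρ) ρ, |g x| ≤ C * |x| ^ k) :
    ∀ t ∈ Set.Icc (-ρ) ρ, |f t| ≤ C * |t| ^ (k + 1) := by
  intro t ht
  have htρ : |t| ≤ ρ := abs_le.2 ⟨ht.1, ht.2⟩
  have habs : ∀ x ∈ Set.uIcc 0 t, |x| ≤ |t| := by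
    intro x hx
    rcases Set.mem_uIcc.1 hx with ⟨h1, h2⟩ | ⟨h1, h2⟩
    · rw [abs_of_nonneg h1]; exact h2.trans (le_abs_self t)
    · rw [abs_of_nonpos h2]; linarith [neg_abs_le t]
  have hsub : Set.uIcc 0 t ⊆ Set.Icc (-ρ) ρ := fun x hx =>
    Set.mem_Icc.2 (abs_le.1 ((habs x hx).trans htρ))
  have key := Convex.norm_image_sub_le_of_norm_hasDerivWithin_le
    (f := f) (f' := g) (s := Set.uIcc 0 t) (C := C * |t| ^ k)
    (fun x hx => (hf x (hsub hx)).hasDerivWithinAt)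
    (fun x hx => by
      have h1 := hg x (hsub hx)
      have h2 : |x| ^ k ≤ |t| ^ k := pow_le_pow_left₀ (abs_nonneg x) (habs x hx) k
      calc ‖g x‖ = |g x| := rfl
        _ ≤ C * |x| ^ k := h1
        _ ≤ C * |t| ^ k := by nlinarith)
    (convex_uIcc 0 t) Set.left_mem_uIcc Set.right_mem_uIcc
  rw [hf0, sub_zero, sub_zero, Real.norm_eq_abs, Real.norm_eq_abs] at key
  calc |f t| ≤ C * |t| ^ k * |t| := key
    _ = C * |t| ^ (k + 1) := by rw [pow_succ]; ring

lemma pow_littleO (k : ℕ) : (fun x : ℝ => x ^ (k + 1)) =o[𝓝 (0:ℝ)] (fun x => x ^ k) := by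
  have h1 : (fun x : ℝ => x) =o[𝓝 (0:ℝ)] (fun _ => (1:ℝ)) :=
    (isLittleO_one_iff ℝ).2 Filter.tendsto_id
  have := (isBigO_refl (fun x : ℝ => x ^ k) (𝓝 (0:ℝ))).mul_isLittleO h1
  simpa [pow_succ] using this

open Asymptotics in
theorem taylor_expansion_at_infinite_degree_zero
    (T₀ T₁ δ : ℝ) (hT : T₀ < T₁) (hδ : 0 < δ)
    (a b c : ℤ → ℝ → ℝ) (w : ℝ → ℤ → ℝ)
    (hacont : ∀ j : ℤ, ContinuousOn (a j) (Set.Icc T₀ T₁))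
    (hbcont : ∀ j : ℤ, ContinuousOn (b j) (Set.Icc T₀ T₁))
    (hccont : ∀ j : ℤ, ContinuousOn (c j) (Set.Icc T₀ T₁))
    (hbound : ∃ C : ℝ, ∀ j : ℤ, ∀ t ∈ Set.Icc T₀ T₁,
      |a j t| ≤ C ∧ |b j t| ≤ C ∧ |c j t| ≤ C)
    (hpos : ∀ j : ℤ, ∀ t ∈ Set.Icc T₀ T₁, δ ≤ a j t ∧ δ ≤ b j t)
    (hsol : ∀ j : ℤ, ∀ t ∈ Set.Icc T₀ T₁,
      HasDerivWithinAt (fun s => w s j)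
        (a j t * w t (j - 1) + b j t * w t (j + 1) + c j t * w t j) (Set.Icc T₀ T₁) t)
    (hT₀ : T₀ < 0) (hT₁ : 0 < T₁)
    (hw0 : w 0 (0 : ℤ) ≠ 0)
    (hz : ∀ i : ℤ, 1 ≤ i → w 0 i = 0) :
    ∀ j : ℕ, 1 ≤ j →
      ((fun t : ℝ => w t (j : ℤ) -
          (w 0 (0 : ℤ) / (Nat.factorial j : ℝ)) * (∏ i ∈ Finset.Icc 1 j, a (i : ℤ) 0) * t ^ j)
        =o[𝓝[Set.Icc T₀ T₁] (0 : ℝ)] (fun t : ℝ => t ^ j)) ∧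
      (w 0 (0 : ℤ) / (Nat.factorial j : ℝ)) * (∏ i ∈ Finset.Icc 1 j, a (i : ℤ) 0) ≠ 0 ∧
      ((w 0 (0 : ℤ) / (Nat.factorial j : ℝ)) * (∏ i ∈ Finset.Icc 1 j, a (i : ℤ) 0)) *
        w 0 (0 : ℤ) > 0 := by
  obtain ⟨Cb, hCb⟩ := hbound
  have h0mem : (0:ℝ) ∈ Set.Icc T₀ T₁ := ⟨le_of_lt hT₀, le_of_lt hT₁⟩
  have hCb0 : 0 ≤ Cb := le_trans (abs_nonneg _) (hCb 0 0 h0mem).1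
  set r : ℝ := min T₁ (-T₀) / 2 with hrdef
  have hr : 0 < r := by
    have : 0 < min T₁ (-T₀) := lt_min hT₁ (by linarith)
    positivity
  have hsubI : Set.Icc (-r) r ⊆ Set.Icc T₀ T₁ := by
    intro x hx
    have h1 : r ≤ T₁ / 2 := by
      rw [hrdef]; have := min_le_left T₁ (-T₀); linarith
    have h2 : r ≤ -T₀ / 2 := by
      rw [hrdef]; have := min_le_right T₁ (-T₀); linarith
    exact ⟨by have := hx.1; linarith, by have := hx.2; linarith⟩
  have hnhds : ∀ x ∈ Set.Icc (-r) r, Set.Icc T₀ T₁ ∈ 𝓝 x := by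
    intro x hx
    have h1 : r ≤ T₁ / 2 := by
      rw [hrdef]; have := min_le_left T₁ (-T₀); linarith
    have h2 : r ≤ -T₀ / 2 := by
      rw [hrdef]; have := min_le_right T₁ (-T₀); linarith
    exact Icc_mem_nhds (by have := hx.1; linarith) (by have := hx.2; linarith)
  -- derivative as genuine HasDerivAt on the small interval
  have hD : ∀ (i : ℤ), ∀ x ∈ Set.Icc (-r) r, HasDerivAt (fun s => w s i)
      (a i x * w x (i - 1) + b i x * w x (i + 1) + c i x * w x i) x :=
    fun i x hx => (hsol i x (hsubI hx)).hasDerivAt (hnhds x hx)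
  -- continuity of each coordinate
  have hwcont : ∀ i : ℤ, ContinuousOn (fun t => w t i) (Set.Icc T₀ T₁) :=
    fun i t ht => (hsol i t ht).continuousWithinAt
  -- growth bounds
  have hgrow : ∀ k : ℕ, ∀ i : ℤ, (k : ℤ) ≤ i →
      ∃ C : ℝ, 0 ≤ C ∧ ∀ t ∈ Set.Icc (-r) r, |w t i| ≤ C * |t| ^ k := by
    intro k
    induction k with
    | zero =>
      intro i _
      obtain ⟨M, hM⟩ := (isCompact_Icc (a := -r) (b := r)).exists_bound_of_continuousOn
        ((hwcont i).mono hsubI)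
      refine ⟨max M 0, le_max_right _ _, fun t ht => ?_⟩
      rw [pow_zero, mul_one]
      have := hM t ht
      rw [Real.norm_eq_abs] at this
      exact this.trans (le_max_left _ _)
    | succ k ih =>
      intro i hi
      have hi1 : 1 ≤ i := by omega
      obtain ⟨C1, hC1, h1⟩ := ih (i - 1) (by omega)
      obtain ⟨C2, hC2, h2⟩ := ih (i + 1) (by omega)
      obtain ⟨C3, hC3, h3⟩ := ih i (by omega)
      refine ⟨Cb * (C1 + C2 + C3), by positivity, ?_⟩
      apply mvt_bound (g := fun x => a i x * w x (i - 1) + b i x * w x (i + 1) + c i x * w x i)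
        (fun x hx => hD i x hx) (hz i hi1) (by positivity)
      intro x hx
      obtain ⟨ha, hb, hc⟩ := hCb i x (hsubI hx)
      have e1 : |a i x * w x (i - 1)| ≤ Cb * (C1 * |x| ^ k) := by
        rw [abs_mul]; exact mul_le_mul ha (h1 x hx) (abs_nonneg _) hCb0
      have e2 : |b i x * w x (i + 1)| ≤ Cb * (C2 * |x| ^ k) := by
        rw [abs_mul]; exact mul_le_mul hb (h2 x hx) (abs_nonneg _) hCb0
      have e3 : |c i x * w x i| ≤ Cb * (C3 * |x| ^ k) := by
        rw [abs_mul]; exact mul_le_mul hc (h3 x hx) (abs_nonneg _) hCb0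
      have habc : |a i x * w x (i - 1) + b i x * w x (i + 1) + c i x * w x i|
          ≤ |a i x * w x (i - 1)| + |b i x * w x (i + 1)| + |c i x * w x i| := by
        calc _ ≤ |a i x * w x (i - 1) + b i x * w x (i + 1)| + |c i x * w x i| := abs_add_le _ _
          _ ≤ _ := by have := abs_add_le (a i x * w x (i - 1)) (b i x * w x (i + 1)); linarith
      have : Cb * (C1 + C2 + C3) * |x| ^ k
          = Cb * (C1 * |x| ^ k) + Cb * (C2 * |x| ^ k) + Cb * (C3 * |x| ^ k) := by ring
      rw [this]
      linarith
  -- big-O facts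
  have hO1 : ∀ f : ℝ → ℝ, (∀ x ∈ Set.Icc T₀ T₁, |f x| ≤ Cb) →
      f =O[𝓝 (0:ℝ)] (fun _ => (1:ℝ)) := by
    intro f hf
    rw [isBigO_iff]
    exact ⟨Cb, Filter.eventually_of_mem (Icc_mem_nhds hT₀ hT₁) fun x hx => by
      simpa using hf x hx⟩
  have hOw : ∀ (i : ℤ) (k : ℕ), (k : ℤ) ≤ i →
      (fun x => w x i) =O[𝓝 (0:ℝ)] (fun x => x ^ k) := by
    intro i k hk
    obtain ⟨C, hC0, hC⟩ := hgrow k i hk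
    rw [isBigO_iff]
    refine ⟨C, Filter.eventually_of_mem (Icc_mem_nhds (neg_lt_zero.mpr hr) hr) fun x hx => ?_⟩
    rw [Real.norm_eq_abs, Real.norm_eq_abs, abs_pow]
    exact hC x hx
  -- main induction
  have key : ∀ j : ℕ, (fun t : ℝ => w t (j : ℤ) -
      (w 0 (0 : ℤ) / (Nat.factorial j : ℝ)) * (∏ i ∈ Finset.Icc 1 j, a (i : ℤ) 0) * t ^ j)
      =o[𝓝 (0:ℝ)] (fun t : ℝ => t ^ j) := by
    intro j
    induction j with
    | zero =>
      simp only [Nat.factorial_zero, Nat.cast_one, Finset.Icc_self, pow_zero, mul_one,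
        Nat.cast_zero, div_one]
      rw [show (Finset.Icc 1 0 : Finset ℕ) = ∅ from rfl]
      simp only [Finset.prod_empty, mul_one]
      rw [isLittleO_one_iff]
      have hc : ContinuousAt (fun t => w t (0:ℤ)) 0 :=
        (hwcont 0).continuousAt (Icc_mem_nhds hT₀ hT₁)
      have := hc.tendsto.sub_const (w 0 (0:ℤ))
      simpa using this
    | succ j ih =>
      set dj : ℝ := w 0 (0 : ℤ) / (Nat.factorial j : ℝ) * (∏ i ∈ Finset.Icc 1 j, a (i : ℤ) 0)
        with hdjdef
      set dj1 : ℝ := w 0 (0 : ℤ) / (Nat.factorial (j+1) : ℝ) *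
        (∏ i ∈ Finset.Icc 1 (j+1), a (i : ℤ) 0) with hdj1def
      have hd : a ((j:ℤ)+1) 0 * dj = ((j:ℝ)+1) * dj1 := by
        rw [hdjdef, hdj1def, Finset.prod_Icc_succ_top (Nat.succ_le_succ (Nat.zero_le j)),
          Nat.factorial_succ]
        have hfj : ((Nat.factorial j : ℝ)) ≠ 0 := Nat.cast_ne_zero.2 (Nat.factorial_ne_zero j)
        push_cast
        field_simp
      -- the derivative function
      set g : ℝ → ℝ := fun x => a ((j:ℤ)+1) x * (w x (j:ℤ) - dj * x ^ j)
        + (a ((j:ℤ)+1) x - a ((j:ℤ)+1) 0) * (dj * x ^ j)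
        + b ((j:ℤ)+1) x * w x ((j:ℤ)+2) + c ((j:ℤ)+1) x * w x ((j:ℤ)+1) with hgdef
      have hg : g =o[𝓝 (0:ℝ)] (fun x => x ^ j) := by
        have t1 : (fun x => a ((j:ℤ)+1) x * (w x (j:ℤ) - dj * x ^ j))
            =o[𝓝 (0:ℝ)] (fun x => x ^ j) := by
          have := (hO1 (a ((j:ℤ)+1)) (fun x hx => (hCb _ x hx).1)).mul_isLittleO ih
          simpa using this
        have t2 : (fun x => (a ((j:ℤ)+1) x - a ((j:ℤ)+1) 0) * (dj * x ^ j))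
            =o[𝓝 (0:ℝ)] (fun x => x ^ j) := by
          have ha0 : (fun x => a ((j:ℤ)+1) x - a ((j:ℤ)+1) 0) =o[𝓝 (0:ℝ)] (fun _ => (1:ℝ)) := by
            rw [isLittleO_one_iff]
            have hc : ContinuousAt (a ((j:ℤ)+1)) 0 :=
              (hacont _).continuousAt (Icc_mem_nhds hT₀ hT₁)
            simpa using hc.tendsto.sub_const (a ((j:ℤ)+1) 0)
          have hDj : (fun x : ℝ => dj * x ^ j) =O[𝓝 (0:ℝ)] (fun x => x ^ j) :=
            (isBigO_refl _ _).const_mul_left _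
          simpa using ha0.mul_isBigO hDj
        have t3 : (fun x => b ((j:ℤ)+1) x * w x ((j:ℤ)+2)) =o[𝓝 (0:ℝ)] (fun x => x ^ j) := by
          have := (hO1 (b ((j:ℤ)+1)) (fun x hx => (hCb _ x hx).2.1)).mul
            (hOw ((j:ℤ)+2) (j+1) (by push_cast; omega))
          exact this.trans_isLittleO (by simpa using pow_littleO j)
        have t4 : (fun x => c ((j:ℤ)+1) x * w x ((j:ℤ)+1)) =o[𝓝 (0:ℝ)] (fun x => x ^ j) := by
          have := (hO1 (c ((j:ℤ)+1)) (fun x hx => (hCb _ x hx).2.2)).mul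
            (hOw ((j:ℤ)+1) (j+1) (by push_cast; omega))
          exact this.trans_isLittleO (by simpa using pow_littleO j)
        exact ((t1.add t2).add t3).add t4
      have hderiv : ∀ x ∈ Set.Icc (-r) r,
          HasDerivAt (fun t => w t ((j:ℤ)+1) - dj1 * t ^ (j+1)) (g x) x := by
        intro x hx
        have h1 := (hD ((j:ℤ)+1) x hx).sub ((hasDerivAt_pow (j+1) x).const_mul dj1)
        have hm1 : ((j:ℤ)+1) - 1 = (j:ℤ) := by ring
        have hm2 : ((j:ℤ)+1) + 1 = (j:ℤ)+2 := by ring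
        rw [hm1, hm2] at h1
        have h1' : HasDerivAt (fun t => w t ((j:ℤ)+1) - dj1 * t ^ (j+1)) _ x := h1
        convert h1' using 1
        rw [hgdef]
        simp only [Nat.add_sub_cancel]
        push_cast
        linear_combination (-(x ^ j)) * hd
      rw [isLittleO_iff]
      intro ε hε
      have hev := isLittleO_iff.1 hg hε
      rw [Metric.eventually_nhds_iff] at hev
      obtain ⟨ρ, hρ0, hρ⟩ := hev
      set ρ' : ℝ := min (ρ/2) r with hρ'def
      have hρ'0 : 0 < ρ' := lt_min (by linarith) hr
      have hsubρ : Set.Icc (-ρ') ρ' ⊆ Set.Icc (-r) r :=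
        Set.Icc_subset_Icc (neg_le_neg (min_le_right _ _)) (min_le_right _ _)
      have hbd : ∀ x ∈ Set.Icc (-ρ') ρ', |g x| ≤ ε * |x| ^ j := by
        intro x hx
        have hxd : dist x 0 < ρ := by
          rw [Real.dist_eq, sub_zero]
          have h1 : |x| ≤ ρ' := abs_le.2 ⟨hx.1, hx.2⟩
          have h2 : ρ' ≤ ρ/2 := min_le_left _ _
          linarith
        have := hρ hxd
        simpa [Real.norm_eq_abs, abs_pow] using this
      have h00 : w 0 ((j:ℤ)+1) - dj1 * (0:ℝ) ^ (j+1) = 0 := by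
        rw [hz ((j:ℤ)+1) (by omega)]
        simp
      have hderiv' : ∀ x ∈ Set.Icc (-ρ') ρ',
          HasDerivAt (fun t => w t ((j:ℤ)+1) - dj1 * t ^ (j+1)) (g x) x :=
        fun x hx => hderiv x (hsubρ hx)
      have hmvt := mvt_bound hderiv' h00 (le_of_lt hε) hbd
      refine Filter.eventually_of_mem (Icc_mem_nhds (neg_lt_zero.mpr hρ'0) hρ'0) fun t ht => ?_
      have := hmvt t ht
      rw [Real.norm_eq_abs, Real.norm_eq_abs, abs_pow]
      push_cast
      convert this using 2 <;> push_cast <;> ring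
  intro j hj
  have hprod : 0 < ∏ i ∈ Finset.Icc 1 j, a (i : ℤ) 0 :=
    Finset.prod_pos fun i _ => lt_of_lt_of_le hδ (hpos (i : ℤ) 0 h0mem).1
  have hfac : (0:ℝ) < (Nat.factorial j : ℝ) := by
    exact_mod_cast Nat.factorial_pos j
  have hsign : (w 0 (0 : ℤ) / (Nat.factorial j : ℝ)) * (∏ i ∈ Finset.Icc 1 j, a (i : ℤ) 0) *
      w 0 (0 : ℤ) > 0 := by
    have heq : (w 0 (0 : ℤ) / (Nat.factorial j : ℝ)) * (∏ i ∈ Finset.Icc 1 j, a (i : ℤ) 0) *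
        w 0 (0 : ℤ) = (w 0 (0 : ℤ) * w 0 (0 : ℤ)) * (∏ i ∈ Finset.Icc 1 j, a (i : ℤ) 0) /
        (Nat.factorial j : ℝ) := by ring
    rw [heq]
    exact div_pos (mul_pos (mul_self_pos.2 hw0) hprod) hfac
  refine ⟨(key j).mono nhdsWithin_le_nhds, ?_, hsign⟩
  intro h
  rw [h, zero_mul] at hsign
  exact lt_irrefl 0 hsign
end

section
/- If u ∈ ℝ^ℤ is a rotationally ordered configuration, then there exists a unique ρ ∈ ℝ such that |u_j − u_i − ρ·(j−i)| ≤ 1 for all i, j ∈ ℤ. -/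
open Set

/-- A configuration `u : ℤ → ℝ` is rotationally ordered: for all `p q : ℤ`, the
translate `T_{p,q} u = (i ↦ u (i+p) + q)` is comparable to `u`. -/
def RotOrdered (u : ℤ → ℝ) : Prop :=
  ∀ p q : ℤ, (∀ i : ℤ, u (i + p) + q ≤ u i) ∨ (∀ i : ℤ, u i ≤ u (i + p) + q)

theorem rotation_number_exists_unique (u : ℤ → ℝ) (hu : RotOrdered u) :
    ∃! ρ : ℝ, ∀ i j : ℤ, |u j - u i - ρ * ((j : ℝ) - (i : ℝ))| ≤ 1 := by
  -- Lemma A: the increments over step p differ by at most 1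
  have hA : ∀ p a b : ℤ, u (a + p) - u a ≤ u (b + p) - u b + 1 := by
    intro p a b
    by_contra h
    push_neg at h
    have hm1 : u (b + p) - u b < ((⌊u (b + p) - u b⌋ + 1 : ℤ) : ℝ) := by
      push_cast
      linarith [Int.lt_floor_add_one (u (b + p) - u b)]
    have hm2 : ((⌊u (b + p) - u b⌋ + 1 : ℤ) : ℝ) ≤ u (b + p) - u b + 1 := by
      push_cast
      linarith [Int.floor_le (u (b + p) - u b)]
    push_cast at hm1 hm2
    rcases hu p (-(⌊u (b + p) - u b⌋ + 1)) with h1 | h1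
    · have := h1 a; push_cast at this; linarith
    · have := h1 b; push_cast at this; linarith
  -- telescoping lower bound
  have hlow : ∀ (p i : ℤ) (n : ℕ),
      (n : ℝ) * (u (i + p) - u i - 1) ≤ u (i + (n : ℤ) * p) - u i := by
    intro p i n
    induction n with
    | zero => simp
    | succ n ih =>
      have h1 := hA p i (i + (n : ℤ) * p)
      have he : i + ((n : ℕ) + 1 : ℤ) * p = (i + (n : ℤ) * p) + p := by ring
      have he2 : ((n + 1 : ℕ) : ℤ) = ((n : ℕ) + 1 : ℤ) := by push_cast; ring
      rw [he2, he]
      push_cast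
      linarith
  -- telescoping upper bound
  have hhigh : ∀ (p i j : ℤ) (n : ℕ),
      u (i + (n : ℤ) * p) - u i ≤ (n : ℝ) * (u (j + p) - u j + 1) := by
    intro p i j n
    induction n with
    | zero => simp
    | succ n ih =>
      have h1 := hA p (i + (n : ℤ) * p) j
      have he : i + ((n : ℕ) + 1 : ℤ) * p = (i + (n : ℤ) * p) + p := by ring
      have he2 : ((n + 1 : ℕ) : ℤ) = ((n : ℕ) + 1 : ℤ) := by push_cast; ring
      rw [he2, he]
      push_cast
      linarith
  -- cross inequality
  have hcross : ∀ (p q : ℕ), 0 < p → 0 < q → ∀ i j : ℤ,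
      (u (i + (p : ℤ)) - u i - 1) / (p : ℝ) ≤ (u (j + (q : ℤ)) - u j + 1) / (q : ℝ) := by
    intro p q hp hq i j
    have hp' : (0 : ℝ) < (p : ℝ) := by exact_mod_cast hp
    have hq' : (0 : ℝ) < (q : ℝ) := by exact_mod_cast hq
    rw [div_le_div_iff₀ hp' hq']
    have h1 := hlow (p : ℤ) i q
    have h2 := hhigh (q : ℤ) i j p
    have he : i + (q : ℤ) * (p : ℤ) = i + (p : ℤ) * (q : ℤ) := by ring
    rw [he] at h1
    nlinarith
  set S : Set ℝ := {x | ∃ p : ℕ, 0 < p ∧ ∃ i : ℤ, x = (u (i + (p : ℤ)) - u i - 1) / (p : ℝ)}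
    with hSdef
  have hne : S.Nonempty := ⟨(u ((0 : ℤ) + ((1 : ℕ) : ℤ)) - u 0 - 1) / ((1 : ℕ) : ℝ),
    ⟨1, one_pos, 0, rfl⟩⟩
  have hbdd : BddAbove S := by
    refine ⟨(u ((0 : ℤ) + ((1 : ℕ) : ℤ)) - u 0 + 1) / ((1 : ℕ) : ℝ), ?_⟩
    rintro x ⟨p, hp, i, rfl⟩
    exact hcross p 1 hp one_pos i 0
  set ρ : ℝ := sSup S with hρdef
  have hρ_ge : ∀ p : ℕ, 0 < p → ∀ i : ℤ, (u (i + (p : ℤ)) - u i - 1) / (p : ℝ) ≤ ρ := by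
    intro p hp i
    exact le_csSup hbdd ⟨p, hp, i, rfl⟩
  have hρ_le : ∀ q : ℕ, 0 < q → ∀ j : ℤ, ρ ≤ (u (j + (q : ℤ)) - u j + 1) / (q : ℝ) := by
    intro q hq j
    refine csSup_le hne ?_
    rintro x ⟨p, hp, i, rfl⟩
    exact hcross p q hp hq i j
  -- key bound
  have hkey : ∀ p : ℕ, 0 < p → ∀ i : ℤ, |u (i + (p : ℤ)) - u i - ρ * (p : ℝ)| ≤ 1 := by
    intro p hp i
    have hp' : (0 : ℝ) < (p : ℝ) := by exact_mod_cast hp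
    have h1 := hρ_ge p hp i
    have h2 := hρ_le p hp i
    rw [div_le_iff₀ hp'] at h1
    rw [le_div_iff₀ hp'] at h2
    rw [abs_le]
    constructor <;> nlinarith
  have hmain : ∀ i j : ℤ, |u j - u i - ρ * ((j : ℝ) - (i : ℝ))| ≤ 1 := by
    have haux : ∀ i j : ℤ, i < j → |u j - u i - ρ * ((j : ℝ) - (i : ℝ))| ≤ 1 := by
      intro i j hij
      set p : ℕ := (j - i).toNat with hpdef
      have hp : 0 < p := by omega
      have hj : j = i + (p : ℤ) := by omega
      have hcast : ((j : ℝ) - (i : ℝ)) = (p : ℝ) := by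
        have h2 : (j : ℤ) - i = (p : ℤ) := by omega
        exact_mod_cast h2
      rw [hcast, hj]
      exact hkey p hp i
    intro i j
    rcases lt_trichotomy i j with h | h | h
    · exact haux i j h
    · subst h
      simp
    · have he : u j - u i - ρ * ((j : ℝ) - (i : ℝ))
          = -(u i - u j - ρ * ((i : ℝ) - (j : ℝ))) := by ring
      rw [he, abs_neg]
      exact haux j i h
  refine ⟨ρ, hmain, ?_⟩
  intro ρ' h'
  by_contra hne'
  have hd : 0 < |ρ' - ρ| := abs_pos.mpr (sub_ne_zero.mpr hne')
  obtain ⟨n, hn⟩ := exists_nat_gt (2 / |ρ' - ρ|)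
  have h1 := hmain 0 (n : ℤ)
  have h2 := h' 0 (n : ℤ)
  push_cast at h1 h2
  have e : (ρ' - ρ) * (n : ℝ)
      = (u (n : ℤ) - u 0 - ρ * ((n : ℝ) - 0)) - (u (n : ℤ) - u 0 - ρ' * ((n : ℝ) - 0)) := by
    ring
  have hb : |(ρ' - ρ) * (n : ℝ)| ≤ 2 := by
    rw [abs_le] at h1 h2 ⊢
    constructor <;> [nlinarith; nlinarith]
  rw [abs_mul, abs_of_nonneg (by positivity : (0 : ℝ) ≤ (n : ℝ))] at hb
  rw [div_lt_iff₀ hd] at hn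
  nlinarith
end

section
/- Assume F is constant. Let ε₀ > 0, let u : (−ε₀,ε₀) → K_n be a solution of the FK equation, and define w ∈ ℝ^ℤ by w_j = u_j'(0). Suppose w_0 ≠ 0 and w_i = 0 for all integers i ≥ 1 (a zero of infinite degree of du/dt). Then for every ε ∈ (0,ε₀) there exist t₀, t₁ with |t₀| < ε and |t₁| < ε such that u(t₀) ≠ u(t₁) and u(t₀) − u(t₁) has a singular zero of finite degree at some positions. -/
open Set Filter Topology

/-- First partial derivative `∂₁V`. -/
noncomputable def V1 (V : ℝ → ℝ → ℝ) (x y : ℝ) : ℝ := deriv (fun s => V s y) x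

/-- Second partial derivative `∂₂V`. -/
noncomputable def V2 (V : ℝ → ℝ → ℝ) (x y : ℝ) : ℝ := deriv (fun s => V x s) y

/-- Mixed partial derivative `∂₁∂₂V`. -/
noncomputable def V12 (V : ℝ → ℝ → ℝ) (x y : ℝ) : ℝ := deriv (fun s => V2 V s y) x

/-- The set of configurations with spacing bounded by `n`. -/
def Kn (n : ℕ) : Set (ℤ → ℝ) := {u | ∀ i : ℤ, |u (i + 1) - u i| ≤ (n : ℝ)}

/-- `u` solves the driven Frenkel–Kontorova equation on the set of times `I`. -/
def SolvesFK (V : ℝ → ℝ → ℝ) (F : ℝ → ℝ) (I : Set ℝ) (u : ℝ → ℤ → ℝ) : Prop :=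
  ∀ j : ℤ, ∀ t ∈ I, HasDerivWithinAt (fun s => u s j)
    (-(V2 V (u t (j - 1)) (u t j)) - V1 V (u t j) (u t (j + 1)) + F t) I t

/-- `w` has a singular zero of finite degree `k ≥ 1` at positions `m+1, …, m+k`. -/
def finDegSingZero (w : ℤ → ℝ) (m : ℤ) (k : ℕ) : Prop :=
  1 ≤ k ∧ w m ≠ 0 ∧ (∀ i : ℕ, 1 ≤ i → i ≤ k → w (m + i) = 0) ∧ w (m + k + 1) ≠ 0 ∧
    (2 ≤ k ∨ (k = 1 ∧ w m * w (m + 2) > 0))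

lemma aux_strictMonoOn {a b : ℝ} {h h' : ℝ → ℝ}
    (hd : ∀ t ∈ Set.Icc a b, HasDerivAt h (h' t) t)
    (hp : ∀ t ∈ Set.Ioo a b, 0 < h' t) : StrictMonoOn h (Set.Icc a b) := by
  apply strictMonoOn_of_deriv_pos (convex_Icc a b)
    (fun t ht => (hd t ht).continuousAt.continuousWithinAt)
  intro x hx
  rw [interior_Icc] at hx
  rw [(hd x (Set.Ioo_subset_Icc_self hx)).deriv]
  exact hp x hx

lemma aux_strictAntiOn {a b : ℝ} {h h' : ℝ → ℝ}
    (hd : ∀ t ∈ Set.Icc a b, HasDerivAt h (h' t) t)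
    (hp : ∀ t ∈ Set.Ioo a b, h' t < 0) : StrictAntiOn h (Set.Icc a b) := by
  apply strictAntiOn_of_deriv_neg (convex_Icc a b)
    (fun t ht => (hd t ht).continuousAt.continuousWithinAt)
  intro x hx
  rw [interior_Icc] at hx
  rw [(hd x (Set.Ioo_subset_Icc_self hx)).deriv]
  exact hp x hx

lemma aux_ev_lt {h : ℝ → ℝ} {x M : ℝ} (hc : ContinuousAt h x) (hM : |h x| < M) :
    ∀ᶠ t in 𝓝 x, |h t| < M :=
  hc ((isOpen_lt continuous_abs continuous_const).mem_nhds hM)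

lemma aux_ev_pos {h : ℝ → ℝ} {x : ℝ} (hc : ContinuousAt h x) (hp : 0 < h x) :
    ∀ᶠ t in 𝓝 x, 0 < h t :=
  hc ((isOpen_lt continuous_const continuous_id).mem_nhds hp)

lemma expand_bilin (Φ : (ℝ×ℝ) →L[ℝ] ((ℝ×ℝ) →L[ℝ] ℝ)) (a b : ℝ) (v : ℝ×ℝ) :
    Φ (a, b) v = a * Φ (1,0) v + b * Φ (0,1) v := by
  have h : ((a,b) : ℝ×ℝ) = a • ((1:ℝ),(0:ℝ)) + b • ((0:ℝ),(1:ℝ)) := by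
    simp [Prod.ext_iff]
  rw [h, map_add, map_smul, map_smul]
  simp

lemma V1_eq {V : ℝ → ℝ → ℝ} (hV : ContDiff ℝ 2 (Function.uncurry V)) (x y : ℝ) :
    V1 V x y = fderiv ℝ (Function.uncurry V) (x, y) (1, 0) := by
  have hcurve : HasDerivAt (fun s : ℝ => (s, y)) ((1:ℝ), (0:ℝ)) x :=
    (hasDerivAt_id x).prodMk (hasDerivAt_const x y)
  have hf : HasFDerivAt (Function.uncurry V) (fderiv ℝ (Function.uncurry V) (x,y)) (x,y) :=
    (hV.differentiable (by norm_num) (x,y)).hasFDerivAt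
  have hd : HasDerivAt (fun s => V s y) (fderiv ℝ (Function.uncurry V) (x, y) (1, 0)) x := by
    simpa [Function.comp_def, Function.uncurry] using hf.comp_hasDerivAt x hcurve
  exact hd.deriv

lemma V2_eq {V : ℝ → ℝ → ℝ} (hV : ContDiff ℝ 2 (Function.uncurry V)) (x y : ℝ) :
    V2 V x y = fderiv ℝ (Function.uncurry V) (x, y) (0, 1) := by
  have hcurve : HasDerivAt (fun s : ℝ => (x, s)) ((0:ℝ), (1:ℝ)) y :=
    (hasDerivAt_const y x).prodMk (hasDerivAt_id y)
  have hf : HasFDerivAt (Function.uncurry V) (fderiv ℝ (Function.uncurry V) (x,y)) (x,y) :=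
    (hV.differentiable (by norm_num) (x,y)).hasFDerivAt
  have hd : HasDerivAt (fun s => V x s) (fderiv ℝ (Function.uncurry V) (x, y) (0, 1)) y := by
    simpa [Function.comp_def, Function.uncurry] using hf.comp_hasDerivAt y hcurve
  exact hd.deriv

lemma V12_eq {V : ℝ → ℝ → ℝ} (hV : ContDiff ℝ 2 (Function.uncurry V)) (x y : ℝ) :
    V12 V x y = fderiv ℝ (fderiv ℝ (Function.uncurry V)) (x, y) (1, 0) (0, 1) := by
  have hg1 : ContDiff ℝ 1 (fderiv ℝ (Function.uncurry V)) := hV.fderiv_right (by norm_num)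
  have hcurve : HasDerivAt (fun s : ℝ => (s, y)) ((1:ℝ), (0:ℝ)) x :=
    (hasDerivAt_id x).prodMk (hasDerivAt_const x y)
  have hf : HasFDerivAt (fderiv ℝ (Function.uncurry V))
      (fderiv ℝ (fderiv ℝ (Function.uncurry V)) (x,y)) (x,y) :=
    (hg1.differentiable one_ne_zero (x,y)).hasFDerivAt
  have h1 : HasDerivAt (fun s => fderiv ℝ (Function.uncurry V) (s, y))
      (fderiv ℝ (fderiv ℝ (Function.uncurry V)) (x,y) (1,0)) x := by
    simpa [Function.comp_def] using hf.comp_hasDerivAt x hcurve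
  have h2 : HasDerivAt (fun s => fderiv ℝ (Function.uncurry V) (s, y) (0,1))
      (fderiv ℝ (fderiv ℝ (Function.uncurry V)) (x,y) (1,0) (0,1)) x := by
    simpa using h1.clm_apply (hasDerivAt_const x ((0:ℝ),(1:ℝ)))
  have heq : (fun s => V2 V s y) = fun s => fderiv ℝ (Function.uncurry V) (s, y) (0,1) :=
    funext fun s => V2_eq hV s y
  rw [V12, heq]
  exact h2.deriv


lemma aux_neg_of_mul_pos_neg {a b : ℝ} (h : 0 < a * b) (ha : a < 0) : b < 0 := by
  by_contra hb
  push_neg at hb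
  nlinarith

lemma aux_pos_of_mul_pos_pos {a b : ℝ} (h : 0 < a * b) (ha : 0 < a) : 0 < b := by
  by_contra hb
  push_neg at hb
  nlinarith

lemma aux_pos_mul {c x y : ℝ} (h1 : 0 < c * x) (h2 : 0 < c * y) : 0 < x * y := by
  nlinarith [mul_pos h1 h2, sq_nonneg c]

set_option maxHeartbeats 4000000 in
theorem infinite_degree_zero_of_derivative
    (δ : ℝ) (hδ : 0 < δ) (V : ℝ → ℝ → ℝ) (F : ℝ → ℝ)
    (hV : ContDiff ℝ 2 (Function.uncurry V))
    (hper : ∀ x y : ℝ, V (x + 1) (y + 1) = V x y)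
    (htwist : ∀ x y : ℝ, V12 V x y ≤ -δ)
    (hF : Continuous F)
    (hFconst : ∀ t t' : ℝ, F t = F t')
    (n : ℕ) (ε₀ : ℝ) (hε₀ : 0 < ε₀)
    (u : ℝ → ℤ → ℝ)
    (huK : ∀ t ∈ Set.Ioo (-ε₀) ε₀, u t ∈ Kn n)
    (hu : SolvesFK V F (Set.Ioo (-ε₀) ε₀) u)
    (hw0 : deriv (fun s => u s 0) 0 ≠ 0)
    (hwz : ∀ i : ℤ, 1 ≤ i → deriv (fun s => u s i) 0 = 0) :
    ∀ ε ∈ Set.Ioo (0 : ℝ) ε₀, ∃ t₀ t₁ : ℝ, |t₀| < ε ∧ |t₁| < ε ∧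
      u t₀ ≠ u t₁ ∧ ∃ m : ℤ, ∃ k : ℕ, finDegSingZero (fun i => u t₀ i - u t₁ i) m k := by
  intro ε hε
  obtain ⟨hεpos, hεlt⟩ := hε
  have hJopen : IsOpen (Set.Ioo (-ε₀) ε₀) := isOpen_Ioo
  have h0J : (0:ℝ) ∈ Set.Ioo (-ε₀) ε₀ := ⟨by linarith, hε₀⟩
  set f := Function.uncurry V with hfdef
  set g := fderiv ℝ f with hgdef
  set G := fderiv ℝ g with hGdef
  have hg1 : ContDiff ℝ 1 g := hV.fderiv_right (by norm_num)
  have hdiffg : Differentiable ℝ g := hg1.differentiable one_ne_zero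
  have hGcont : Continuous G := hg1.continuous_fderiv one_ne_zero
  set p : ℤ → ℝ → ℝ := fun j t => u t j with hpdef
  set w : ℤ → ℝ → ℝ := fun j t =>
    -(V2 V (p (j-1) t) (p j t)) - V1 V (p j t) (p (j+1) t) + F 0 with hwdef
  have hDp : ∀ (j : ℤ), ∀ t ∈ Set.Ioo (-ε₀) ε₀, HasDerivAt (p j) (w j t) t := by
    intro j t ht
    have h := (hu j t ht).hasDerivAt (hJopen.mem_nhds ht)
    rw [hFconst t 0] at h
    exact h
  have hweq : ∀ j : ℤ, deriv (fun s => u s j) 0 = w j 0 := fun j => (hDp j 0 h0J).deriv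
  have hc0 : w 0 0 ≠ 0 := by rw [← hweq 0]; exact hw0
  have hwz' : ∀ i : ℤ, 1 ≤ i → w i 0 = 0 := fun i hi => by rw [← hweq i]; exact hwz i hi
  set c0 := w 0 0 with hc0def
  -- chain rule for g-compositions
  have hgclm : ∀ (a b : ℝ → ℝ) (a' b' : ℝ) (t : ℝ) (v : ℝ × ℝ),
      HasDerivAt a a' t → HasDerivAt b b' t →
      HasDerivAt (fun s => g (a s, b s) v) (G (a t, b t) (a', b') v) t := by
    intro a b a' b' t v ha hb
    have hcurve : HasDerivAt (fun s => (a s, b s)) (a', b') t := ha.prodMk hb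
    have hfd : HasFDerivAt g (G (a t, b t)) (a t, b t) := (hdiffg (a t, b t)).hasFDerivAt
    have h1 : HasDerivAt (fun s => g (a s, b s)) (G (a t, b t) (a', b')) t := by
      simpa [Function.comp_def] using hfd.comp_hasDerivAt t hcurve
    simpa using h1.clm_apply (hasDerivAt_const t v)
  set W : ℤ → ℝ → ℝ := fun j t =>
    -(G (p (j-1) t, p j t) (w (j-1) t, w j t) ((0:ℝ),(1:ℝ)))
      - G (p j t, p (j+1) t) (w j t, w (j+1) t) ((1:ℝ),(0:ℝ)) with hWdef
  have hDw : ∀ (j : ℤ), ∀ t ∈ Set.Ioo (-ε₀) ε₀, HasDerivAt (w j) (W j t) t := by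
    intro j t ht
    have e1 : HasDerivAt (fun s => g (p (j-1) s, p j s) ((0:ℝ),(1:ℝ)))
        (G (p (j-1) t, p j t) (w (j-1) t, w j t) ((0:ℝ),(1:ℝ))) t :=
      hgclm _ _ _ _ _ _ (hDp (j-1) t ht) (hDp j t ht)
    have e2 : HasDerivAt (fun s => g (p j s, p (j+1) s) ((1:ℝ),(0:ℝ)))
        (G (p j t, p (j+1) t) (w j t, w (j+1) t) ((1:ℝ),(0:ℝ))) t :=
      hgclm _ _ _ _ _ _ (hDp j t ht) (hDp (j+1) t ht)
    have hfun : w j = fun s => -(g (p (j-1) s, p j s) ((0:ℝ),(1:ℝ)))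
        - g (p j s, p (j+1) s) ((1:ℝ),(0:ℝ)) + F 0 := by
      funext s
      simp only [hwdef, V2_eq hV, V1_eq hV, ← hfdef, ← hgdef]
    rw [hfun]
    exact (e1.neg.sub e2).add_const (F 0)
  -- coefficient functions for j = 2
  set A : ℝ → ℝ := fun t => -(G (p 1 t, p 2 t) ((1:ℝ),(0:ℝ)) ((0:ℝ),(1:ℝ))) with hAdef
  set Bc : ℝ → ℝ := fun t => -(G (p 1 t, p 2 t) ((0:ℝ),(1:ℝ)) ((0:ℝ),(1:ℝ)))
      - G (p 2 t, p 3 t) ((1:ℝ),(0:ℝ)) ((1:ℝ),(0:ℝ)) with hBdef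
  set Cc : ℝ → ℝ := fun t => -(G (p 2 t, p 3 t) ((0:ℝ),(1:ℝ)) ((1:ℝ),(0:ℝ))) with hCdef
  have hA : ∀ t, δ ≤ A t := by
    intro t
    have h := htwist (p 1 t) (p 2 t)
    rw [V12_eq hV, ← hfdef, ← hgdef, ← hGdef] at h
    simp only [hAdef]
    linarith
  have hW2 : ∀ t, W 2 t = A t * w 1 t + Bc t * w 2 t + Cc t * w 3 t := by
    intro t
    have e1 : (2:ℤ) - 1 = 1 := by norm_num
    have e2 : (2:ℤ) + 1 = 3 := by norm_num
    simp only [hWdef, hAdef, hBdef, hCdef, e1, e2]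
    rw [expand_bilin (G (p 1 t, p 2 t)) (w 1 t) (w 2 t) ((0:ℝ),(1:ℝ)),
      expand_bilin (G (p 2 t, p 3 t)) (w 2 t) (w 3 t) ((1:ℝ),(0:ℝ))]
    ring
  have hW20 : W 2 0 = 0 := by
    rw [hW2 0, hwz' 1 le_rfl, hwz' 2 (by norm_num), hwz' 3 (by norm_num)]
    ring
  have hW30 : W 3 0 = 0 := by
    have e1 : (3:ℤ) - 1 = 2 := by norm_num
    have e2 : (3:ℤ) + 1 = 4 := by norm_num
    simp only [hWdef, e1, e2, hwz' 2 (by norm_num), hwz' 3 (by norm_num),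
      hwz' 4 (by norm_num)]
    rw [expand_bilin (G (p 2 0, p 3 0)) 0 0 ((0:ℝ),(1:ℝ)),
      expand_bilin (G (p 3 0, p 4 0)) 0 0 ((1:ℝ),(0:ℝ))]
    ring
  have hW10 : W 1 0 = (-(G (p 0 0, p 1 0) ((1:ℝ),(0:ℝ)) ((0:ℝ),(1:ℝ)))) * c0 := by
    have e1 : (1:ℤ) - 1 = 0 := by norm_num
    have e2 : (1:ℤ) + 1 = 2 := by norm_num
    simp only [hWdef, e1, e2, hwz' 1 le_rfl, hwz' 2 (by norm_num), ← hc0def]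
    rw [expand_bilin (G (p 0 0, p 1 0)) c0 0 ((0:ℝ),(1:ℝ)),
      expand_bilin (G (p 1 0, p 2 0)) 0 0 ((1:ℝ),(0:ℝ))]
    ring
  set A0 : ℝ := -(G (p 0 0, p 1 0) ((1:ℝ),(0:ℝ)) ((0:ℝ),(1:ℝ))) with hA0def
  have hA0 : δ ≤ A0 := by
    have h := htwist (p 0 0) (p 1 0)
    rw [V12_eq hV, ← hfdef, ← hgdef, ← hGdef] at h
    simp only [hA0def]
    linarith
  set L : ℝ := A0 * c0 with hLdef
  have hc0L : 0 < c0 * L := by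
    have h1 : 0 < c0 * c0 := mul_self_pos.mpr hc0
    have : c0 * L = A0 * (c0 * c0) := by rw [hLdef]; ring
    rw [this]
    nlinarith
  have hLne : L ≠ 0 := by
    intro h
    rw [h, mul_zero] at hc0L
    exact lt_irrefl 0 hc0L
  have habsL : 0 < |L| := abs_pos.mpr hLne
  have habsc0 : 0 < |c0| := abs_pos.mpr hc0
  -- little-o facts
  have o1 : (fun t => w 1 t - t * L) =o[𝓝 0] (fun t : ℝ => t) := by
    have h := hasDerivAt_iff_isLittleO.mp (hDw 1 0 h0J)
    rw [hW10, hwz' 1 le_rfl] at h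
    simpa [sub_zero, smul_eq_mul] using h
  have o2 : (fun t => w 2 t) =o[𝓝 0] (fun t : ℝ => t) := by
    have h := hasDerivAt_iff_isLittleO.mp (hDw 2 0 h0J)
    rw [hW20, hwz' 2 (by norm_num)] at h
    simpa using h
  have o3 : (fun t => w 3 t) =o[𝓝 0] (fun t : ℝ => t) := by
    have h := hasDerivAt_iff_isLittleO.mp (hDw 3 0 h0J)
    rw [hW30, hwz' 3 (by norm_num)] at h
    simpa using h
  -- continuity facts
  have hpc : ∀ j : ℤ, ContinuousAt (p j) 0 := fun j => (hDp j 0 h0J).continuousAt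
  have happly : ∀ (v v' : ℝ×ℝ), Continuous fun (X : (ℝ×ℝ) →L[ℝ] ((ℝ×ℝ) →L[ℝ] ℝ)) => X v v' := by
    intro v v'
    exact (ContinuousLinearMap.apply ℝ ℝ v').continuous.comp
      (ContinuousLinearMap.apply ℝ ((ℝ×ℝ) →L[ℝ] ℝ) v).continuous
  have hGA : ∀ (j k : ℤ) (v v' : ℝ×ℝ), ContinuousAt (fun t => G (p j t, p k t) v v') 0 := by
    intro j k v v'
    exact (happly v v').continuousAt.comp (hGcont.continuousAt.comp ((hpc j).prodMk (hpc k)))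
  have hBcC : ContinuousAt Bc 0 := by
    simp only [hBdef]
    exact ((hGA 1 2 (0,1) (0,1)).neg).sub (hGA 2 3 (1,0) (1,0))
  have hCcC : ContinuousAt Cc 0 := by
    simp only [hCdef]
    exact (hGA 2 3 (0,1) (1,0)).neg
  set M : ℝ := |Bc 0| + |Cc 0| + 1 with hMdef
  have hM : 0 < M := by positivity
  set c' : ℝ := δ * |L| / (8 * M) with hc'def
  have hc'pos : 0 < c' := div_pos (mul_pos hδ habsL) (by positivity)
  have hMc' : M * c' = δ * |L| / 8 := by
    rw [hc'def]
    field_simp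
  -- eventual facts
  have EvJ : ∀ᶠ t in 𝓝 0, t ∈ Set.Ioo (-ε₀) ε₀ := hJopen.mem_nhds h0J
  have Ev0 : ∀ᶠ t in 𝓝 0, 0 < c0 * w 0 t :=
    aux_ev_pos (continuousAt_const.mul (hDw 0 0 h0J).continuousAt)
      (by rw [← hc0def]; exact mul_self_pos.mpr hc0)
  have Ev1 : ∀ᶠ t in 𝓝 0, |w 1 t - t * L| ≤ |L| / 2 * |t| := by
    have h := o1.def (show (0:ℝ) < |L|/2 by positivity)
    simpa [Real.norm_eq_abs] using h
  have Ev2 : ∀ᶠ t in 𝓝 0, |w 2 t| ≤ c' * |t| := by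
    simpa [Real.norm_eq_abs] using o2.def hc'pos
  have Ev3 : ∀ᶠ t in 𝓝 0, |w 3 t| ≤ c' * |t| := by
    simpa [Real.norm_eq_abs] using o3.def hc'pos
  have EvB : ∀ᶠ t in 𝓝 0, |Bc t| < M :=
    aux_ev_lt hBcC (by rw [hMdef]; linarith [abs_nonneg (Cc 0)])
  have EvC : ∀ᶠ t in 𝓝 0, |Cc t| < M :=
    aux_ev_lt hCcC (by rw [hMdef]; linarith [abs_nonneg (Bc 0)])
  clear_value c0 L A0 M c'
  have EvAll := EvJ.and (Ev0.and (Ev1.and (Ev2.and (Ev3.and (EvB.and EvC)))))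
  rw [Metric.eventually_nhds_iff] at EvAll
  obtain ⟨σ, hσpos, hσ⟩ := EvAll
  have hkey : ∀ t : ℝ, |t| < σ → t ∈ Set.Ioo (-ε₀) ε₀ ∧ 0 < c0 * w 0 t ∧
      |w 1 t - t * L| ≤ |L| / 2 * |t| ∧ |w 2 t| ≤ c' * |t| ∧ |w 3 t| ≤ c' * |t| ∧
      |Bc t| < M ∧ |Cc t| < M := by
    intro t ht
    exact hσ (by rw [Real.dist_eq, sub_zero]; exact ht)
  -- quantitative sign facts
  have F2q : ∀ t : ℝ, |t| < σ → |c0| * (|L| / 2) * t ^ 2 ≤ t * (c0 * w 1 t) := by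
    intro t ht
    obtain ⟨-, -, h1, -⟩ := hkey t ht
    have e : t * (c0 * w 1 t) = c0 * L * t ^ 2 + t * (c0 * (w 1 t - t * L)) := by ring
    have hb : |t * (c0 * (w 1 t - t * L))| ≤ |c0| * (|L| / 2) * t ^ 2 := by
      rw [abs_mul, abs_mul]
      calc |t| * (|c0| * |w 1 t - t * L|) ≤ |t| * (|c0| * (|L| / 2 * |t|)) := by
            exact mul_le_mul_of_nonneg_left
              (mul_le_mul_of_nonneg_left h1 (abs_nonneg c0)) (abs_nonneg t)
        _ = |c0| * (|L| / 2) * (|t| * |t|) := by ring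
        _ = |c0| * (|L| / 2) * t ^ 2 := by rw [abs_mul_abs_self]; ring
    have hcL : c0 * L = |c0| * |L| := by rw [← abs_mul]; exact (abs_of_pos hc0L).symm
    have hge := neg_abs_le (t * (c0 * (w 1 t - t * L)))
    rw [hcL] at e
    have k1 : -(|c0| * (|L| / 2) * t ^ 2) ≤ t * (c0 * (w 1 t - t * L)) :=
      le_trans (neg_le_neg hb) hge
    have k2 := add_le_add_right k1 (|c0| * |L| * t ^ 2)
    rw [e]
    calc |c0| * (|L| / 2) * t ^ 2
        = |c0| * |L| * t ^ 2 + -(|c0| * (|L| / 2) * t ^ 2) := by ring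
      _ ≤ |c0| * |L| * t ^ 2 + t * (c0 * (w 1 t - t * L)) := k2
  have F2 : ∀ t : ℝ, |t| < σ → t ≠ 0 → 0 < t * (c0 * w 1 t) := by
    intro t ht htne
    have h2 : 0 < t ^ 2 := by positivity
    have := F2q t ht
    have hprod : 0 < |c0| * (|L| / 2) * t ^ 2 :=
      mul_pos (mul_pos habsc0 (by linarith only [habsL])) h2
    exact lt_of_lt_of_le hprod this
  have F3 : ∀ t : ℝ, |t| < σ → t ≠ 0 → 0 < t * (c0 * W 2 t) := by
    intro t ht htne
    obtain ⟨-, -, -, h2, h3, hB, hC⟩ := hkey t ht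
    have ht2 : 0 < t ^ 2 := by positivity
    have e : t * (c0 * W 2 t)
        = A t * (t * (c0 * w 1 t)) + t * c0 * (Bc t * w 2 t + Cc t * w 3 t) := by
      rw [hW2 t]; ring
    have main : δ * (|c0| * (|L| / 2) * t ^ 2) ≤ A t * (t * (c0 * w 1 t)) :=
      mul_le_mul (hA t) (F2q t ht) (by positivity) (le_trans hδ.le (hA t))
    have j1 : |Bc t * w 2 t| ≤ M * (c' * |t|) := by
      rw [abs_mul]
      exact mul_le_mul hB.le h2 (abs_nonneg _) hM.le
    have j2 : |Cc t * w 3 t| ≤ M * (c' * |t|) := by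
      rw [abs_mul]
      exact mul_le_mul hC.le h3 (abs_nonneg _) hM.le
    have j3 : |Bc t * w 2 t + Cc t * w 3 t| ≤ 2 * (M * (c' * |t|)) :=
      (abs_add_le _ _).trans (by linarith)
    have j4 : |t * c0 * (Bc t * w 2 t + Cc t * w 3 t)|
        ≤ |t| * |c0| * (2 * (M * (c' * |t|))) := by
      rw [abs_mul, abs_mul]
      exact mul_le_mul_of_nonneg_left j3 (by positivity)
    have j6 : |t * c0 * (Bc t * w 2 t + Cc t * w 3 t)| ≤ δ * |L| / 4 * (|c0| * t ^ 2) := by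
      refine j4.trans (le_of_eq ?_)
      rw [show |t| * |c0| * (2 * (M * (c' * |t|))) = M * c' * (2 * (|c0| * (|t| * |t|))) from by
        ring, hMc', abs_mul_abs_self]
      ring
    have hge := neg_abs_le (t * c0 * (Bc t * w 2 t + Cc t * w 3 t))
    have hpos : 0 < δ * |L| / 4 * (|c0| * t ^ 2) := by positivity
    have hmain2 : δ * (|c0| * (|L| / 2) * t ^ 2) = 2 * (δ * |L| / 4 * (|c0| * t ^ 2)) := by ring
    have kJ : -(δ * |L| / 4 * (|c0| * t ^ 2)) ≤ t * c0 * (Bc t * w 2 t + Cc t * w 3 t) :=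
      le_trans (neg_le_neg j6) hge
    have k3 : 2 * (δ * |L| / 4 * (|c0| * t ^ 2)) + -(δ * |L| / 4 * (|c0| * t ^ 2))
        ≤ A t * (t * (c0 * w 1 t)) + t * c0 * (Bc t * w 2 t + Cc t * w 3 t) :=
      add_le_add (hmain2 ▸ main) kJ
    rw [e]
    calc (0:ℝ) < δ * |L| / 4 * (|c0| * t ^ 2) := hpos
      _ = 2 * (δ * |L| / 4 * (|c0| * t ^ 2)) + -(δ * |L| / 4 * (|c0| * t ^ 2)) := by ring
      _ ≤ _ := k3
  -- the radius τ
  set τ := min (σ/2) (ε/2) with hτdef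
  have hτpos : 0 < τ := lt_min (by linarith) (by linarith)
  have hτσ : τ < σ := lt_of_le_of_lt (min_le_left _ _) (by linarith)
  have hτε : τ < ε := lt_of_le_of_lt (min_le_right _ _) (by linarith)
  have hmem : ∀ t : ℝ, |t| ≤ τ → t ∈ Set.Ioo (-ε₀) ε₀ :=
    fun t h => (hkey t (lt_of_le_of_lt h hτσ)).1
  have habs1 : ∀ t ∈ Set.Icc (-τ) (0:ℝ), |t| ≤ τ := by
    intro t ht
    rw [abs_le]
    exact ⟨ht.1, le_trans ht.2 hτpos.le⟩
  have habs2 : ∀ t ∈ Set.Icc (0:ℝ) τ, |t| ≤ τ := by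
    intro t ht
    rw [abs_le]
    exact ⟨le_trans (by linarith) ht.1, ht.2⟩
  have hσ1 : ∀ t ∈ Set.Ioo (-τ) (0:ℝ), |t| < σ := fun t ht =>
    lt_of_le_of_lt (habs1 t (Set.Ioo_subset_Icc_self ht)) hτσ
  have hσ2 : ∀ t ∈ Set.Ioo (0:ℝ) τ, |t| < σ := fun t ht =>
    lt_of_le_of_lt (habs2 t (Set.Ioo_subset_Icc_self ht)) hτσ
  -- monotonicity pieces
  have M0L : StrictMonoOn (fun t => c0 * p 0 t) (Set.Icc (-τ) 0) := by
    refine aux_strictMonoOn (h' := fun t => c0 * w 0 t) ?_ ?_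
    · intro t ht
      exact (hDp 0 t (hmem t (habs1 t ht))).const_mul c0
    · intro t ht
      exact (hkey t (hσ1 t ht)).2.1
  have M0R : StrictMonoOn (fun t => c0 * p 0 t) (Set.Icc 0 τ) := by
    refine aux_strictMonoOn (h' := fun t => c0 * w 0 t) ?_ ?_
    · intro t ht
      exact (hDp 0 t (hmem t (habs2 t ht))).const_mul c0
    · intro t ht
      exact (hkey t (hσ2 t ht)).2.1
  have M1L : StrictAntiOn (fun t => c0 * p 1 t) (Set.Icc (-τ) 0) := by
    refine aux_strictAntiOn (h' := fun t => c0 * w 1 t) ?_ ?_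
    · intro t ht
      exact (hDp 1 t (hmem t (habs1 t ht))).const_mul c0
    · intro t ht
      exact aux_neg_of_mul_pos_neg (F2 t (hσ1 t ht) (ne_of_lt ht.2)) ht.2
  have M1R : StrictMonoOn (fun t => c0 * p 1 t) (Set.Icc 0 τ) := by
    refine aux_strictMonoOn (h' := fun t => c0 * w 1 t) ?_ ?_
    · intro t ht
      exact (hDp 1 t (hmem t (habs2 t ht))).const_mul c0
    · intro t ht
      exact aux_pos_of_mul_pos_pos (F2 t (hσ2 t ht) (ne_of_gt ht.1)) ht.1
  have K2L : StrictAntiOn (fun t => c0 * w 2 t) (Set.Icc (-τ) 0) := by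
    refine aux_strictAntiOn (h' := fun t => c0 * W 2 t) ?_ ?_
    · intro t ht
      exact (hDw 2 t (hmem t (habs1 t ht))).const_mul c0
    · intro t ht
      exact aux_neg_of_mul_pos_neg (F3 t (hσ1 t ht) (ne_of_lt ht.2)) ht.2
  have K2R : StrictMonoOn (fun t => c0 * w 2 t) (Set.Icc 0 τ) := by
    refine aux_strictMonoOn (h' := fun t => c0 * W 2 t) ?_ ?_
    · intro t ht
      exact (hDw 2 t (hmem t (habs2 t ht))).const_mul c0
    · intro t ht
      exact aux_pos_of_mul_pos_pos (F3 t (hσ2 t ht) (ne_of_gt ht.1)) ht.1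
  have h0IccL : (0:ℝ) ∈ Set.Icc (-τ) (0:ℝ) := ⟨by linarith, le_rfl⟩
  have h0IccR : (0:ℝ) ∈ Set.Icc (0:ℝ) τ := ⟨le_rfl, hτpos.le⟩
  have hw20 : c0 * w 2 0 = 0 := by rw [hwz' 2 (by norm_num), mul_zero]
  have hw2sign : ∀ t, (t ∈ Set.Ioo (-τ) (0:ℝ) ∨ t ∈ Set.Ioo (0:ℝ) τ) → 0 < c0 * w 2 t := by
    intro t hcase
    rcases hcase with h | h
    · have h5 := K2L (Set.Ioo_subset_Icc_self h) h0IccL h.2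
      simpa [hw20] using h5
    · have h5 := K2R h0IccR (Set.Ioo_subset_Icc_self h) h.1
      simpa [hw20] using h5
  have M2L : StrictMonoOn (fun t => c0 * p 2 t) (Set.Icc (-τ) 0) := by
    refine aux_strictMonoOn (h' := fun t => c0 * w 2 t) ?_ ?_
    · intro t ht
      exact (hDp 2 t (hmem t (habs1 t ht))).const_mul c0
    · intro t ht
      exact hw2sign t (Or.inl ht)
  have M2R : StrictMonoOn (fun t => c0 * p 2 t) (Set.Icc 0 τ) := by
    refine aux_strictMonoOn (h' := fun t => c0 * w 2 t) ?_ ?_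
    · intro t ht
      exact (hDp 2 t (hmem t (habs2 t ht))).const_mul c0
    · intro t ht
      exact hw2sign t (Or.inr ht)
  -- choice of t₀
  have hτIccL : -τ ∈ Set.Icc (-τ) (0:ℝ) := ⟨le_rfl, by linarith⟩
  have hgap : c0 * p 1 0 < c0 * p 1 (-τ) := M1L hτIccL h0IccL (by linarith)
  have hcont1 : ContinuousAt (fun t => c0 * p 1 t) 0 := continuousAt_const.mul (hpc 1)
  have hev : ∀ᶠ t in 𝓝 0, |c0 * p 1 t - c0 * p 1 0| < c0 * p 1 (-τ) - c0 * p 1 0 :=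
    aux_ev_lt (hcont1.sub continuousAt_const)
      (by rw [sub_self, abs_zero]; exact sub_pos.mpr hgap)
  rw [Metric.eventually_nhds_iff] at hev
  obtain ⟨ρ, hρpos, hρ⟩ := hev
  set t₀ := min (ρ/2) (τ/2) with ht₀def
  have ht₀pos : 0 < t₀ := lt_min (by linarith) (by linarith)
  have ht₀τ : t₀ ≤ τ/2 := min_le_right _ _
  have ht₀Icc : t₀ ∈ Set.Icc (0:ℝ) τ := ⟨ht₀pos.le, by linarith⟩
  have ht₀ρ : dist t₀ 0 < ρ := by
    rw [Real.dist_eq, sub_zero, abs_of_pos ht₀pos]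
    have := min_le_left (ρ/2) (τ/2)
    calc t₀ ≤ ρ/2 := this
      _ < ρ := by linarith
  have hlt : c0 * p 1 t₀ < c0 * p 1 (-τ) := by
    have h1 := hρ ht₀ρ
    have h2 := le_abs_self (c0 * p 1 t₀ - c0 * p 1 0)
    linarith
  have hgt : c0 * p 1 0 < c0 * p 1 t₀ := M1R h0IccR ht₀Icc ht₀pos
  -- IVT gives t₁
  have hcontOn : ContinuousOn (fun t => c0 * p 1 t) (Set.Icc (-τ) 0) := fun t ht =>
    (continuousAt_const.mul ((hDp 1 t (hmem t (habs1 t ht))).continuousAt)).continuousWithinAt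
  have hsub := intermediate_value_Ioo' (by linarith : -τ ≤ (0:ℝ)) hcontOn
  obtain ⟨t₁, ht₁Ioo, ht₁eq⟩ := hsub (Set.mem_Ioo.mpr ⟨hgt, hlt⟩)
  have ht₁Icc : t₁ ∈ Set.Icc (-τ) (0:ℝ) := Set.Ioo_subset_Icc_self ht₁Ioo
  -- the three coordinates
  have hx : 0 < c0 * (u t₀ 0 - u t₁ 0) := by
    have a1 : c0 * p 0 t₁ < c0 * p 0 0 := M0L ht₁Icc h0IccL ht₁Ioo.2
    have a2 : c0 * p 0 0 < c0 * p 0 t₀ := M0R h0IccR ht₀Icc ht₀pos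
    have hexp : c0 * (u t₀ 0 - u t₁ 0) = c0 * p 0 t₀ - c0 * p 0 t₁ := by
      simp only [hpdef]
      ring
    rw [hexp]
    have := lt_trans a1 a2
    exact sub_pos.mpr this
  have hz : 0 < c0 * (u t₀ 2 - u t₁ 2) := by
    have a1 : c0 * p 2 t₁ < c0 * p 2 0 := M2L ht₁Icc h0IccL ht₁Ioo.2
    have a2 : c0 * p 2 0 < c0 * p 2 t₀ := M2R h0IccR ht₀Icc ht₀pos
    have hexp : c0 * (u t₀ 2 - u t₁ 2) = c0 * p 2 t₀ - c0 * p 2 t₁ := by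
      simp only [hpdef]
      ring
    rw [hexp]
    exact sub_pos.mpr (lt_trans a1 a2)
  have hy : u t₀ 1 = u t₁ 1 := by
    have h1 : c0 * p 1 t₁ = c0 * p 1 t₀ := ht₁eq
    have h2 : p 1 t₁ = p 1 t₀ := mul_left_cancel₀ hc0 h1
    exact h2.symm
  have hxne : u t₀ 0 - u t₁ 0 ≠ 0 := by
    intro h
    rw [h, mul_zero] at hx
    exact lt_irrefl 0 hx
  have hzne : u t₀ 2 - u t₁ 2 ≠ 0 := by
    intro h
    rw [h, mul_zero] at hz
    exact lt_irrefl 0 hz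
  refine ⟨t₀, t₁, ?_, ?_, ?_, 0, 1, ?_⟩
  · rw [abs_of_pos ht₀pos]
    linarith
  · rw [abs_of_neg ht₁Ioo.2]
    have := ht₁Ioo.1
    linarith
  · intro h
    exact hxne (by rw [congrFun h 0, sub_self])
  · have e1 : (0:ℤ) + ((1:ℕ):ℤ) = 1 := by norm_num
    have e2 : (0:ℤ) + ((1:ℕ):ℤ) + 1 = 2 := by norm_num
    have e3 : (0:ℤ) + 2 = 2 := by norm_num
    refine ⟨le_rfl, hxne, ?_, ?_, Or.inr ⟨rfl, ?_⟩⟩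
    · intro i hi1 hik
      have hieq : i = 1 := le_antisymm hik hi1
      subst hieq
      show u t₀ ((0:ℤ) + ((1:ℕ):ℤ)) - u t₁ ((0:ℤ) + ((1:ℕ):ℤ)) = 0
      rw [e1, hy, sub_self]
    · show u t₀ ((0:ℤ) + ((1:ℕ):ℤ) + 1) - u t₁ ((0:ℤ) + ((1:ℕ):ℤ) + 1) ≠ 0
      rw [e2]
      exact hzne
    · show (u t₀ 0 - u t₁ 0) * (u t₀ ((0:ℤ) + 2) - u t₁ ((0:ℤ) + 2)) > 0
      rw [e3]
      exact aux_pos_mul hx hz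
end
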